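/- Let 0 < α ≤ 1, let h be analytic on the open unit disk 𝔻 with h'(z) ≠ 0 for all z ∈ 𝔻, and let φ be analytic on 𝔻 with |φ(z)| ≤ 1 for all z ∈ 𝔻 such that h''(z)·(z·φ(z) − 1) = α·φ(z)·h'(z) for all z ∈ 𝔻. Then the Schwarzian derivative of h satisfies S_h(z) = −α·(2·φ'(z) + (2 + α)·φ(z)²)/(2·(z·φ(z) − 1)²) for all z ∈ 𝔻. -/

import Mathlib

open Complex Metric

/-- The Schwarzian derivative `S_h = (h''/h')' - (1/2)(h''/h')²`. -/
noncomputable def schwarzian (h : ℂ → ℂ) : ℂ → ℂ := fun z =>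
  deriv (fun w => deriv (deriv h) w / deriv h w) z -
    (1 / 2) * (deriv (deriv h) z / deriv h z) ^ 2

theorem stmt_11 {α : ℝ} (hα0 : 0 < α) (hα1 : α ≤ 1)
    {h : ℂ → ℂ} (ha : AnalyticOnNhd ℂ h (ball (0:ℂ) 1))
    (hh' : ∀ z ∈ ball (0:ℂ) 1, deriv h z ≠ 0)
    {φ : ℂ → ℂ} (hφa : AnalyticOnNhd ℂ φ (ball (0:ℂ) 1))
    (hφb : ∀ z ∈ ball (0:ℂ) 1, ‖φ z‖ ≤ 1)
    (hφh : ∀ z ∈ ball (0:ℂ) 1,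
      deriv (deriv h) z * (z * φ z - 1) = (α : ℂ) * φ z * deriv h z) :
    ∀ z ∈ ball (0:ℂ) 1,
      schwarzian h z =
        -(α : ℂ) * (2 * deriv φ z + (2 + (α : ℂ)) * φ z ^ 2) /
          (2 * (z * φ z - 1) ^ 2) := by
  -- denominators are nonzero
  have hden : ∀ w ∈ ball (0:ℂ) 1, w * φ w - 1 ≠ 0 := by
    intro w hw hc
    have h1 : w * φ w = 1 := by linear_combination hc
    have habs : ‖w * φ w‖ < 1 := by
      rw [norm_mul]
      calc ‖w‖ * ‖φ w‖
            ≤ ‖w‖ * 1 :=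
              mul_le_mul_of_nonneg_left (hφb w hw) (norm_nonneg _)
          _ = ‖w‖ := mul_one _
          _ < 1 := mem_ball_zero_iff.mp hw
    rw [h1, norm_one] at habs
    exact lt_irrefl _ habs
  -- the key pointwise identity on the ball
  have key : ∀ w ∈ ball (0:ℂ) 1,
      deriv (deriv h) w / deriv h w = (α : ℂ) * φ w / (w * φ w - 1) := by
    intro w hw
    rw [div_eq_div_iff (hh' w hw) (hden w hw)]
    linear_combination hφh w hw
  intro z hz
  have hφd : HasDerivAt φ (deriv φ z) z := (hφa z hz).differentiableAt.hasDerivAt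
  have hnum : HasDerivAt (fun w => (α : ℂ) * φ w) ((α : ℂ) * deriv φ z) z :=
    hφd.const_mul _
  have hd : HasDerivAt (fun w => w * φ w - 1) (φ z + z * deriv φ z) z := by
    have := ((hasDerivAt_id z).mul hφd).sub_const 1
    simpa [one_mul] using this
  have hg : HasDerivAt (fun w => (α : ℂ) * φ w / (w * φ w - 1))
      (((α : ℂ) * deriv φ z * (z * φ z - 1) -
        (α : ℂ) * φ z * (φ z + z * deriv φ z)) / (z * φ z - 1) ^ 2) z :=
    hnum.div hd (hden z hz)
  have hev : (fun w => deriv (deriv h) w / deriv h w)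
      =ᶠ[nhds z] (fun w => (α : ℂ) * φ w / (w * φ w - 1)) := by
    filter_upwards [isOpen_ball.mem_nhds hz] with w hw using key w hw
  have hderiv_eq : deriv (fun w => deriv (deriv h) w / deriv h w) z =
      ((α : ℂ) * deriv φ z * (z * φ z - 1) -
        (α : ℂ) * φ z * (φ z + z * deriv φ z)) / (z * φ z - 1) ^ 2 := by
    rw [hev.deriv_eq]
    exact hg.deriv
  have hden' := hden z hz
  rw [schwarzian, hderiv_eq, key z hz]
  field_simp
  ring
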